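/- Let K be a commutative semiring and (Σ,M) an OP alphabet. For every weighted OPA A over (Σ,M) and K there exists a restricted weighted OPA B over (Σ,M) and K with ⟦A⟧=⟦B⟧. Consequently, over a commutative semiring every regular series is strictly regular. -/

import Mathlib

namespace WOP

/-- Precedence relations: yields precedence, equal in precedence, takes precedence. -/
inductive PrecRel where
  | lt | eq | gt
deriving DecidableEq

/-- An operator precedence matrix on `Σ ∪ {#}`, where `none` encodes `#`.
It assigns at most one precedence relation to each ordered pair, with
`# ⋖ a` and `a ⋗ #` for every letter `a`. -/
structure OPM (A : Type) where
  rel : Option A → Option A → Option PrecRel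
  hash_lt : ∀ a : A, rel none (some a) = some .lt
  hash_gt : ∀ a : A, rel (some a) none = some .gt

variable {A B K : Type}

/-- The letter of `#w#` at position `i` (positions `0` and `> |w|` carry `#`, i.e. `none`). -/
def letterAt (w : List A) (i : ℕ) : Option A :=
  if i = 0 then none else w[i - 1]?

section ChainRel

variable (M : OPM A) (L : ℕ → Option A)

mutual
  /-- `ChainMid M L k j`: there are `k = k_s < ... < k_m = j` with
  `L k_s ≐ L k_{s+1} ≐ ... ≐ L k_{m-1} ⋗ L k_m` and the gap condition between
  consecutive elements. -/
  inductive ChainMid : ℕ → ℕ → Prop where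
    | last {k j : ℕ} : M.rel (L k) (L j) = some .gt → ChainGap k j → ChainMid k j
    | step {k k' j : ℕ} : M.rel (L k) (L k') = some .eq → ChainGap k k' →
        ChainMid k' j → ChainMid k j

  /-- The gap condition between consecutive elements of a chain:
  adjacent positions or a chain. -/
  inductive ChainGap : ℕ → ℕ → Prop where
    | adj (k : ℕ) : ChainGap k (k + 1)
    | chain {k k' : ℕ} : Chain k k' → ChainGap k k'

  /-- The chain relation `i ⤳ j`: there are positions `i = k_1 < ... < k_m = j` with
  `L k_1 ⋖ L k_2 ≐ ... ≐ L k_{m-1} ⋗ L k_m` such that consecutive `k`'s are adjacent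
  or themselves related by `⤳`. -/
  inductive Chain : ℕ → ℕ → Prop where
    | mk {i k j : ℕ} : M.rel (L i) (L k) = some .lt → ChainGap i k → ChainMid k j →
        Chain i j
end

end ChainRel

/-- `(Σ,M)^+`: the set of nonempty words compatible with `M`, i.e. `0 ⤳ |w|+1` in `#w#`. -/
def OPWords (M : OPM A) : Set (List A) :=
  {w | w ≠ [] ∧ Chain M (letterAt w) 0 (w.length + 1)}

/-- An (unweighted) operator precedence automaton over the alphabet `A`. -/
structure OPA (A : Type) where
  Q : Type
  fin : Fintype Q
  I : Set Q
  F : Set Q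
  δpush : Set (Q × A × Q)
  δshift : Set (Q × A × Q)
  δpop : Set (Q × Q × Q)

/-- A weighted operator precedence automaton over the alphabet `A` and weights in `K`. -/
structure WOPA (A K : Type) extends OPA A where
  wtpush : Q × A × Q → K
  wtshift : Q × A × Q → K
  wtpop : Q × Q × Q → K

/-- A configuration: a stack of (symbol, state) pairs, a current state,
and the remaining input. -/
structure Config (A Q : Type) where
  stack : List (A × Q)
  state : Q
  input : List A

/-- The moves (transitions) an OPA may take. -/
inductive Move (A Q : Type) where
  | push (q : Q) (b : A) (r : Q)
  | shift (q : Q) (b : A) (r : Q)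
  | pop (q p r : Q)

/-- The topmost stack symbol (`none` = `#` for the empty stack). -/
def topSym {Q : Type} (st : List (A × Q)) : Option A := st.head?.map Prod.fst

/-- One step of an OPA on an OP alphabet `(A, M)`. -/
inductive Exec (M : OPM A) (T : OPA A) : Config A T.Q → Move A T.Q → Config A T.Q → Prop where
  | push {st : List (A × T.Q)} {q r : T.Q} {b : A} {x : List A} :
      M.rel (topSym st) (some b) = some .lt → (q, b, r) ∈ T.δpush →
      Exec M T ⟨st, q, b :: x⟩ (.push q b r) ⟨(b, q) :: st, r, x⟩
  | shift {st : List (A × T.Q)} {p q r : T.Q} {a b : A} {x : List A} :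
      M.rel (some a) (some b) = some .eq → (q, b, r) ∈ T.δshift →
      Exec M T ⟨(a, p) :: st, q, b :: x⟩ (.shift q b r) ⟨(b, p) :: st, r, x⟩
  | pop {st : List (A × T.Q)} {p q r : T.Q} {a : A} {x : List A} :
      M.rel (some a) x.head? = some .gt → (q, p, r) ∈ T.δpop →
      Exec M T ⟨(a, p) :: st, q, x⟩ (.pop q p r) ⟨st, r, x⟩

/-- Execution of a sequence of moves. -/
inductive ExecList (M : OPM A) (T : OPA A) :
    Config A T.Q → List (Move A T.Q) → Config A T.Q → Prop where
  | nil (c : Config A T.Q) : ExecList M T c [] c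
  | cons {c c' c'' : Config A T.Q} {m : Move A T.Q} {ms : List (Move A T.Q)} :
      Exec M T c m c' → ExecList M T c' ms c'' → ExecList M T c (m :: ms) c''

/-- The weight of a move of a weighted OPA. -/
def moveWt [Semiring K] (W : WOPA A K) : Move A W.Q → K
  | .push q b r => W.wtpush (q, b, r)
  | .shift q b r => W.wtshift (q, b, r)
  | .pop q p r => W.wtpop (q, p, r)

/-- The accepting runs of an OPA on `w`: an initial state, a sequence of moves from the
initial configuration (empty stack, whole input) to a final configuration
(empty stack, input read), and the final state reached. -/
def AccRuns (M : OPM A) (T : OPA A) (w : List A) : Set (T.Q × List (Move A T.Q) × T.Q) :=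
  {ρ | ρ.1 ∈ T.I ∧ ρ.2.2 ∈ T.F ∧ ExecList M T ⟨[], ρ.1, w⟩ ρ.2.1 ⟨[], ρ.2.2, []⟩}

/-- The behavior `⟦W⟧(w)`: the sum over all accepting runs of `W` on `w` of the product
(in order) of the weights of the moves of the run. -/
noncomputable def behavior [Semiring K] (M : OPM A) (W : WOPA A K) (w : List A) : K :=
  ∑ᶠ ρ ∈ AccRuns M W.toOPA w, (ρ.2.1.map (moveWt W)).prod

/-- A weighted OPA is restricted (an rwOPA) if all pop weights are `1`. -/
def Restricted [Semiring K] (W : WOPA A K) : Prop := ∀ t ∈ W.δpop, W.wtpop t = 1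

/-- A series `S : (Σ,M)^+ → K` is regular if it is the behavior of some wOPA. -/
def Regular [Semiring K] (M : OPM A) (S : List A → K) : Prop :=
  ∃ W : WOPA A K, ∀ w ∈ OPWords M, S w = behavior M W w

/-- A series is strictly regular if it is the behavior of some restricted wOPA. -/
def StrictlyRegular [Semiring K] (M : OPM A) (S : List A → K) : Prop :=
  ∃ W : WOPA A K, Restricted W ∧ ∀ w ∈ OPWords M, S w = behavior M W w

/-- Unweighted acceptance. -/
def Accepts (M : OPM A) (T : OPA A) (w : List A) : Prop :=
  ∃ qI ms qF, qI ∈ T.I ∧ qF ∈ T.F ∧ ExecList M T ⟨[], qI, w⟩ ms ⟨[], qF, []⟩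

/-- A language `L ⊆ (Σ,M)^+` is an operator precedence language if it is the set of
compatible words accepted by some OPA. -/
def IsOPL (M : OPM A) (L : Set (List A)) : Prop :=
  ∃ T : OPA A, L = {w | w ∈ OPWords M ∧ Accepts M T w}

/-- The intersection `S ∩ L` of a series with a language. -/
noncomputable def interSeries [Semiring K] (S : List A → K) (L : Set (List A))
    (w : List A) : K :=
  open Classical in if w ∈ L then S w else 0

/-- `h : Σ → Γ` is OPM-preserving: `a ⊙ b` iff `h(a) ⊙ h(b)` for every relation `⊙`. -/
def OPMPreserving (M : OPM A) (M' : OPM B) (h : A → B) : Prop :=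
  ∀ a b : A, M.rel (some a) (some b) = M'.rel (some (h a)) (some (h b))

/-- The image series `h(S)(v) = ∑_{w ∈ (Σ,M)^+, h(w) = v} S(w)`. -/
noncomputable def mapSeries [Semiring K] (M : OPM A) (h : A → B) (S : List A → K)
    (v : List B) : K :=
  ∑ᶠ w ∈ {w | w ∈ OPWords M ∧ w.map h = v}, S w

/-- The pullback OPM `h⁻¹(M)` along `h : Σ' → Σ`. -/
def pullOPM (M : OPM A) (h : B → A) : OPM B where
  rel o₁ o₂ := M.rel (o₁.map h) (o₂.map h)
  hash_lt b := M.hash_lt (h b)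
  hash_gt b := M.hash_gt (h b)

/-- The Nivat class `N(Σ,M,K)`: series obtained from a one-state restricted wOPA over a
pulled-back OP alphabet, intersected with an OPL, followed by the projection. -/
def NivatClass [Semiring K] (M : OPM A) (S : List A → K) : Prop :=
  ∃ (B : Type) (_ : Fintype B) (h : B → A) (W : WOPA B K) (L : Set (List B)),
    Restricted W ∧ (∃ q₀ : W.Q, ∀ q : W.Q, q = q₀) ∧ IsOPL (pullOPM M h) L ∧
    ∀ v ∈ OPWords M,
      S v = mapSeries (pullOPM M h) h (interSeries (behavior (pullOPM M h) W) L) v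

/-- An OPL step function: a finite sum `∑ kᵢ · 1_{Lᵢ}` with the `Lᵢ` OPLs forming a
partition of `(Σ,M)^+`. -/
def IsOPLStep [Semiring K] (M : OPM A) (S : List A → K) : Prop :=
  ∃ (n : ℕ) (k : Fin n → K) (L : Fin n → Set (List A)),
    (∀ i, IsOPL M (L i)) ∧ (∀ i j, i ≠ j → Disjoint (L i) (L j)) ∧
    (⋃ i, L i) = OPWords M ∧ ∀ i, ∀ w ∈ L i, S w = k i


/-!
To remove pop weights, the automaton pays for each pop when it pushes the stack frame that
this pop will later remove. At a push it guesses the pop transition `(q, p, r)` that will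
close the new frame, multiplies the push weight by its weight, and carries the guess in its
state while the frame is on top; shifts keep the guess, and a pop is only allowed along the
guessed transition, after which the guess of the frame below, saved in the stack, is
restored. Accepting runs of the new automaton correspond bijectively to accepting runs of
the old one (the guesses are determined by the run), and in a commutative semiring the
reordering of the factors does not change the weight.
-/

section GuessPops

variable {M : OPM A} {T : OPA A}

theorem Exec.right_unique {c d d' : Config A T.Q} {m : Move A T.Q}
    (h : Exec M T c m d) (h' : Exec M T c m d') : d = d' := by
  cases h <;> cases h' <;> rfl

theorem ExecList.right_unique {c d d' : Config A T.Q} {ms : List (Move A T.Q)}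
    (h : ExecList M T c ms d) (h' : ExecList M T c ms d') : d = d' := by
  induction h with
  | nil => cases h'; rfl
  | cons hx _ ih =>
    cases h' with
    | cons hx' hrest' => exact ih (hx.right_unique hx' ▸ hrest')

/-- The second state component is the guessed pop transition that will close the topmost
stack frame (`none` while the stack is empty). -/
@[reducible] def OPA.guessPops (T : OPA A) : OPA A where
  Q := T.Q × Option (T.Q × T.Q × T.Q)
  fin := letI := T.fin; inferInstance
  I := {s | s.1 ∈ T.I ∧ s.2 = none}
  F := {s | s.1 ∈ T.F ∧ s.2 = none}
  δpush := {t | (t.1.1, t.2.1, t.2.2.1) ∈ T.δpush}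
  δshift := {t | (t.1.1, t.2.1, t.2.2.1) ∈ T.δshift ∧ t.2.2.2 = t.1.2}
  δpop := {t | (t.1.1, t.2.1.1, t.2.2.1) ∈ T.δpop ∧
    t.1.2 = some (t.1.1, t.2.1.1, t.2.2.1) ∧ t.2.2.2 = t.2.1.2}

def OPA.projConfig (T : OPA A) (c : Config A T.guessPops.Q) : Config A T.Q :=
  ⟨c.stack.map fun p => (p.1, p.2.1), c.state.1, c.input⟩

def OPA.projMove (T : OPA A) : Move A T.guessPops.Q → Move A T.Q
  | .push q b r => .push q.1 b r.1
  | .shift q b r => .shift q.1 b r.1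
  | .pop q p r => .pop q.1 p.1 r.1

/-- The guess stored in the bottom stack frame, i.e. the guess of the empty stack. -/
def OPA.bottomGuess (T : OPA A) (c : Config A T.guessPops.Q) : Option (T.Q × T.Q × T.Q) :=
  (c.stack.map fun p => p.2.2).getLastD c.state.2

@[simp] theorem topSym_map_snd {Q Q' : Type} (f : Q → Q') (st : List (A × Q)) :
    topSym (st.map fun p => (p.1, f p.2)) = topSym st := by
  cases st <;> rfl

theorem Exec.guessPops_proj {c d : Config A T.guessPops.Q} {m : Move A T.guessPops.Q}
    (h : Exec M T.guessPops c m d) :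
    Exec M T (T.projConfig c) (T.projMove m) (T.projConfig d) := by
  cases h with
  | push hrel hmem => exact Exec.push (by simpa using hrel) hmem
  | shift hrel hmem => exact Exec.shift hrel hmem.1
  | pop hrel hmem => exact Exec.pop hrel hmem.1

theorem ExecList.guessPops_proj {c d : Config A T.guessPops.Q}
    {ms : List (Move A T.guessPops.Q)} (h : ExecList M T.guessPops c ms d) :
    ExecList M T (T.projConfig c) (ms.map T.projMove) (T.projConfig d) := by
  induction h with
  | nil c => exact ExecList.nil _
  | cons hx _ ih => exact ExecList.cons hx.guessPops_proj ih

/-- Pushes record their source in the pushed frame, shifts keep the guess, and the guess at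
the source of a pop is the pop itself. -/
theorem Exec.guessPops_eq_of_proj {c c' d : Config A T.guessPops.Q}
    {m m' : Move A T.guessPops.Q} (h : Exec M T.guessPops c m d)
    (h' : Exec M T.guessPops c' m' d) (hm : T.projMove m = T.projMove m')
    (hc : T.projConfig c = T.projConfig c') : c = c' ∧ m = m' := by
  cases h with
  | push => cases h' with
    | push => exact ⟨rfl, rfl⟩
    | shift => simp [OPA.projMove] at hm
    | pop => simp [OPA.projMove] at hm
  | shift _ hmem => cases h' with
    | push => simp [OPA.projMove] at hm
    | shift _ hmem' =>
      simp only [OPA.projConfig, List.map_cons, Config.mk.injEq, List.cons.injEq,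
        Prod.mk.injEq] at hc
      obtain ⟨⟨⟨rfl, -⟩, -⟩, hq, -⟩ := hc
      obtain rfl : _ = _ := Prod.ext hq (hmem.2.symm.trans hmem'.2)
      exact ⟨rfl, rfl⟩
    | pop => simp [OPA.projMove] at hm
  | pop _ hmem => cases h' with
    | push => simp [OPA.projMove] at hm
    | shift => simp [OPA.projMove] at hm
    | pop _ hmem' =>
      simp only [OPA.projConfig, List.map_cons, Config.mk.injEq, List.cons.injEq,
        Prod.mk.injEq] at hc
      obtain ⟨⟨⟨rfl, hp⟩, -⟩, hq, -⟩ := hc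
      obtain rfl : _ = _ := Prod.ext hp (hmem.2.2.symm.trans hmem'.2.2)
      obtain rfl : _ = _ := Prod.ext hq (by rw [hmem.2.1, hmem'.2.1, hq])
      exact ⟨rfl, rfl⟩

theorem ExecList.guessPops_eq_of_proj {c c' d : Config A T.guessPops.Q}
    {ms ms' : List (Move A T.guessPops.Q)} (h : ExecList M T.guessPops c ms d)
    (h' : ExecList M T.guessPops c' ms' d) (hms : ms.map T.projMove = ms'.map T.projMove)
    (hc : T.projConfig c = T.projConfig c') : c = c' ∧ ms = ms' := by
  induction h generalizing c' ms' with
  | nil => cases h' with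
    | nil => exact ⟨rfl, rfl⟩
    | cons => simp at hms
  | cons hx hrest ih => cases h' with
    | nil => simp at hms
    | cons hx' hrest' =>
      simp only [List.map_cons, List.cons.injEq] at hms
      have hnext := hx.guessPops_proj.right_unique (hc ▸ hms.1 ▸ hx'.guessPops_proj)
      obtain ⟨rfl, rfl⟩ := ih hrest' hms.2 hnext
      obtain ⟨rfl, rfl⟩ := hx.guessPops_eq_of_proj hx' hms.1 hc
      exact ⟨rfl, rfl⟩

theorem Exec.exists_guessPops_lift {c : Config A T.Q} {m : Move A T.Q}
    {d' : Config A T.guessPops.Q} (h : Exec M T c m (T.projConfig d')) :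
    ∃ c' m', Exec M T.guessPops c' m' d' ∧ T.projConfig c' = c ∧ T.projMove m' = m ∧
      T.bottomGuess c' = T.bottomGuess d' := by
  obtain ⟨st', ⟨r, g⟩, x⟩ := d'
  generalize hd : T.projConfig ⟨st', (r, g), x⟩ = d at h
  cases h with
  | push hrel hmem =>
    obtain _ | ⟨⟨b, q, g'⟩, st'⟩ := st'
    · simp [OPA.projConfig] at hd
    · simp only [OPA.projConfig, List.map_cons, Config.mk.injEq, List.cons.injEq,
        Prod.mk.injEq] at hd
      obtain ⟨⟨⟨rfl, rfl⟩, rfl⟩, rfl, rfl⟩ := hd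
      refine ⟨⟨st', (q, g'), b :: x⟩, .push (q, g') b (r, g), Exec.push ?_ hmem, rfl, rfl, ?_⟩
      · simpa using hrel
      · simp only [OPA.bottomGuess, List.map_cons, List.getLastD_cons]
  | @shift _ _ q _ a _ _ hrel hmem =>
    obtain _ | ⟨⟨b, p, g'⟩, st'⟩ := st'
    · simp [OPA.projConfig] at hd
    · simp only [OPA.projConfig, List.map_cons, Config.mk.injEq, List.cons.injEq,
        Prod.mk.injEq] at hd
      obtain ⟨⟨⟨rfl, rfl⟩, rfl⟩, rfl, rfl⟩ := hd
      exact ⟨⟨(a, (p, g')) :: st', (q, g), b :: x⟩, .shift (q, g) b (r, g),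
        Exec.shift hrel ⟨hmem, rfl⟩, rfl, rfl, by simp [OPA.bottomGuess]⟩
  | @pop _ p q _ a _ hrel hmem =>
    simp only [OPA.projConfig, Config.mk.injEq] at hd
    obtain ⟨rfl, rfl, rfl⟩ := hd
    exact ⟨⟨(a, (p, g)) :: st', (q, some (q, p, r)), x⟩,
      .pop (q, some (q, p, r)) (p, g) (r, g), Exec.pop hrel ⟨hmem, rfl, rfl⟩, rfl, rfl,
      by simp only [OPA.bottomGuess, List.map_cons, List.getLastD_cons]⟩

theorem ExecList.exists_guessPops_lift {c : Config A T.Q} {ms : List (Move A T.Q)} {q : T.Q}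
    (h : ExecList M T c ms ⟨[], q, []⟩) :
    ∃ c' ms', ExecList M T.guessPops c' ms' ⟨[], (q, none), []⟩ ∧ T.projConfig c' = c ∧
      ms'.map T.projMove = ms ∧ T.bottomGuess c' = none := by
  generalize hd : (⟨[], q, []⟩ : Config A T.Q) = d at h
  induction h with
  | nil => exact ⟨_, [], ExecList.nil _, by simp [← hd, OPA.projConfig], rfl, rfl⟩
  | cons hx _ ih =>
    obtain ⟨c₁, ms₁, hrun, rfl, rfl, hbot⟩ := ih hd
    obtain ⟨c', m', hx', rfl, rfl, hbot'⟩ := hx.exists_guessPops_lift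
    exact ⟨c', m' :: ms₁, ExecList.cons hx' hrun, rfl, rfl, hbot'.trans hbot⟩

end GuessPops

namespace WOPA

section Semiring

variable [Semiring K] (W : WOPA A K)

def popWt : Option (W.Q × W.Q × W.Q) → K
  | none => 1
  | some t => W.wtpop t

@[reducible] def toRestricted : WOPA A K where
  toOPA := W.guessPops
  wtpush t := W.wtpush (t.1.1, t.2.1, t.2.2.1) * W.popWt t.2.2.2
  wtshift t := W.wtshift (t.1.1, t.2.1, t.2.2.1)
  wtpop _ := 1

theorem restricted_toRestricted : Restricted W.toRestricted := fun _ _ => rfl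

/-- The weights of the pops guessed in the configuration and not yet performed. -/
def pendingPopWt (c : Config A W.guessPops.Q) : K :=
  W.popWt c.state.2 * (c.stack.map fun p => W.popWt p.2.2).prod

end Semiring

variable [CommSemiring K] {M : OPM A} {W : WOPA A K}

theorem moveWt_projMove_mul_pendingPopWt {c d : Config A W.guessPops.Q}
    {m : Move A W.guessPops.Q} (h : Exec M W.guessPops c m d) :
    moveWt W (W.projMove m) * W.pendingPopWt d =
      moveWt W.toRestricted m * W.pendingPopWt c := by
  cases h with
  | push => simp only [moveWt, OPA.projMove, pendingPopWt, List.map_cons,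
      List.prod_cons]; ring
  | @shift _ _ q r _ _ _ _ hmem =>
    have hguess : r.2 = q.2 := hmem.2
    simp only [moveWt, OPA.projMove, pendingPopWt, List.map_cons,
      List.prod_cons, hguess]
  | @pop _ p q r _ _ _ hmem =>
    have hguess : q.2 = some (q.1, p.1, r.1) := hmem.2.1
    have hrestore : r.2 = p.2 := hmem.2.2
    simp only [moveWt, OPA.projMove, pendingPopWt, List.map_cons,
      List.prod_cons, hguess, hrestore, popWt]
    ring

theorem prod_moveWt_projMove_mul_pendingPopWt {c d : Config A W.guessPops.Q}
    {ms : List (Move A W.guessPops.Q)} (h : ExecList M W.guessPops c ms d) :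
    ((ms.map W.projMove).map (moveWt W)).prod * W.pendingPopWt d =
      (ms.map (moveWt W.toRestricted)).prod * W.pendingPopWt c := by
  induction h with
  | nil => simp
  | cons hx _ ih =>
    simp only [List.map_cons, List.prod_cons]
    rw [mul_assoc, ih, mul_left_comm, moveWt_projMove_mul_pendingPopWt hx]
    ring

variable (M W) in
theorem behavior_toRestricted (w : List A) :
    behavior M W w = behavior M W.toRestricted w := by
  refine (finsum_mem_eq_of_bijOn (fun ρ => (ρ.1.1, ρ.2.1.map W.projMove, ρ.2.2.1))
    ⟨?mapsTo, ?injOn, ?surjOn⟩ ?weight).symm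
  case mapsTo =>
    rintro ⟨qI, ms, qF⟩ ⟨hI, hF, hrun⟩
    exact ⟨hI.1, hF.1, hrun.guessPops_proj⟩
  case injOn =>
    rintro ⟨qI, ms, qF⟩ ⟨hI, hF, hrun⟩ ⟨qI', ms', qF'⟩ ⟨hI', hF', hrun'⟩ heq
    simp only [Prod.mk.injEq] at heq
    obtain ⟨hqI, hms, -⟩ := heq
    obtain rfl : qI = qI' := Prod.ext hqI (hI.2.trans hI'.2.symm)
    have hend := hrun.guessPops_proj.right_unique (hms ▸ hrun'.guessPops_proj)
    obtain rfl : qF = qF' := Prod.ext (by simpa [OPA.projConfig] using hend)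
      (hF.2.trans hF'.2.symm)
    obtain ⟨-, rfl⟩ := hrun.guessPops_eq_of_proj hrun' hms rfl
    rfl
  case surjOn =>
    rintro ⟨qI, ms, qF⟩ ⟨hI, hF, hrun⟩
    obtain ⟨⟨st, ⟨q₀, g⟩, w₀⟩, ms', hrun', hc, rfl, hbot⟩ := hrun.exists_guessPops_lift
    simp only [OPA.projConfig, Config.mk.injEq, List.map_eq_nil_iff] at hc
    obtain ⟨rfl, rfl, rfl⟩ := hc
    obtain rfl : g = none := hbot
    exact ⟨((q₀, none), ms', (qF, none)), ⟨⟨hI, rfl⟩, ⟨hF, rfl⟩, hrun'⟩, rfl⟩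
  case weight =>
    rintro ⟨⟨qI, _⟩, ms, ⟨qF, _⟩⟩ ⟨⟨-, rfl⟩, ⟨-, rfl⟩, hrun⟩
    simpa [pendingPopWt, popWt] using
      (prod_moveWt_projMove_mul_pendingPopWt hrun).symm

end WOPA

/-- For a commutative semiring, every wOPA has an equivalent restricted wOPA;
consequently every regular series is strictly regular. -/
theorem weighted_to_restricted {A K : Type} [Fintype A] [CommSemiring K] (M : OPM A) :
    (∀ W : WOPA A K, ∃ B : WOPA A K, Restricted B ∧
        ∀ w ∈ OPWords M, behavior M W w = behavior M B w) ∧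
    (∀ S : List A → K, Regular M S → StrictlyRegular M S) := by
  refine ⟨fun W => ⟨W.toRestricted, W.restricted_toRestricted,
    fun w _ => WOPA.behavior_toRestricted M W w⟩, ?_⟩
  rintro S ⟨W, hW⟩
  exact ⟨W.toRestricted, W.restricted_toRestricted,
    fun w hw => (hW w hw).trans (WOPA.behavior_toRestricted M W w)⟩

end WOP
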